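/- arXiv:2202.09033 — 2 statements merged into one kernel-verified Lean document; each statement's English description precedes it below -/
import Mathlib

section
/- There exists a constant δ > 0 (independent of r₀ and N) such that: for every N > 1, every 0 < r₀ < 1, and every sequence (a_k) in 𝔻 with ρ(a_i, a_j) ≥ r₀ for all i ≠ j and |a_k| ≥ 1 − 1/(2N) for all k, the sequence defined by b_k = (1 − N(1−|a_k|)) a_k satisfies ρ(b_i, b_j) ≥ δ r₀ / N for all i ≠ j. -/
open MeasureTheory Set Complex Filter
open scoped ENNReal Real

noncomputable section

/-- The open unit disk in `ℂ`. -/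
def uDisk : Set ℂ := {z : ℂ | ‖z‖ < 1}

/-- Area measure on `ℂ`, normalized so that the unit disk has measure `1`. -/
def volA : Measure ℂ := (ENNReal.ofReal Real.pi)⁻¹ • volume

/-- Pseudo-hyperbolic distance `ρ(z,w) = |z - w| / |1 - w̄ z|`. -/
def pd (z w : ℂ) : ℝ := ‖z - w‖ / ‖1 - (starRingEnd ℂ) w * z‖

/-- Pseudo-hyperbolic disk `Δ(a,t)`. -/
def pDisk (a : ℂ) (t : ℝ) : Set ℂ := {z | z ∈ uDisk ∧ pd z a < t}

/-- The weighted Bergman measure `dA_α = (α+1)(1-|z|²)^α dA` on the unit disk. -/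
def bergMeasure (α : ℝ) : Measure ℂ :=
  (volA.restrict uDisk).withDensity fun z =>
    ENNReal.ofReal ((α + 1) * (1 - ‖z‖ ^ 2) ^ α)

/-- The joint pull-back measure `μ` induced by `φ` and `ψ`:
`μ(E) = ∫_{φ⁻¹E} ρ(z)^q dA_α + ∫_{ψ⁻¹E} ρ(z)^q dA_α` where `ρ(z) = ρ(φ z, ψ z)`. -/
def jointMu (q α : ℝ) (φ ψ : ℂ → ℂ) : Measure ℂ :=
  Measure.map φ ((bergMeasure α).withDensity fun z => ENNReal.ofReal (pd (φ z) (ψ z) ^ q))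
  + Measure.map ψ ((bergMeasure α).withDensity fun z => ENNReal.ofReal (pd (φ z) (ψ z) ^ q))

/-- The Hardy space (quasi-)norm `‖f‖_{H^p}`. -/
def hardyNorm (p : ℝ) (f : ℂ → ℂ) : ℝ≥0∞ :=
  (⨆ r : Ioo (0:ℝ) 1,
      (ENNReal.ofReal (2 * Real.pi))⁻¹ *
        ∫⁻ θ in Ioc (0:ℝ) (2 * Real.pi),
          ENNReal.ofReal
            (‖f (((r : ℝ) : ℂ) * Complex.exp ((θ : ℂ) * Complex.I))‖ ^ p)) ^ (1 / p)

/-- The weighted Bergman space (quasi-)norm `‖f‖_{A^q_α}`. -/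
def bergNorm (q α : ℝ) (f : ℂ → ℂ) : ℝ≥0∞ :=
  (∫⁻ z, ENNReal.ofReal (‖f z‖ ^ q) ∂bergMeasure α) ^ (1 / q)

/-- The difference of composition-differentiation operators, `(D_φ - D_ψ) f = f'∘φ - f'∘ψ`. -/
def diffOp (φ ψ f : ℂ → ℂ) : ℂ → ℂ := fun z => deriv f (φ z) - deriv f (ψ z)

/-- Boundedness of `D_φ - D_ψ : H^p → A^q_α`. -/
def DBounded (p q α : ℝ) (φ ψ : ℂ → ℂ) : Prop :=
  ∃ C > 0, ∀ f : ℂ → ℂ, DifferentiableOn ℂ f uDisk → hardyNorm p f < ⊤ →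
    bergNorm q α (diffOp φ ψ f) ≤ ENNReal.ofReal C * hardyNorm p f

/-- Compactness of `D_φ - D_ψ : H^p → A^q_α`. -/
def DCompact (p q α : ℝ) (φ ψ : ℂ → ℂ) : Prop :=
  ∀ f : ℕ → ℂ → ℂ, (∀ n, DifferentiableOn ℂ (f n) uDisk) →
    (∀ n, hardyNorm p (f n) ≤ 1) →
    (∀ K, K ⊆ uDisk → IsCompact K → TendstoUniformlyOn f (fun _ => (0:ℂ)) atTop K) →
    Tendsto (fun n => bergNorm q α (diffOp φ ψ (f n))) atTop (nhds 0)

/-- The Koranyi approach region `Γ(ζ)`. -/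
def koranyi (ζ : ℂ) : Set ℂ :=
  {z | z ∈ uDisk ∧ ‖1 - (starRingEnd ℂ) ζ * z‖ < 1 - ‖z‖ ^ 2}

/-- The Carleson region `Q_t(ζ)`. -/
def cBox (ζ : ℂ) (t : ℝ) : Set ℂ :=
  {z | z ∈ uDisk ∧ ‖1 - (starRingEnd ℂ) ζ * z‖ < t}

/-- The operator (quasi-)norm of `D_φ - D_ψ : H^p → A^q_α`: the least constant `C ≥ 0`
with `‖(D_φ - D_ψ) f‖_{A^q_α} ≤ C ‖f‖_{H^p}` for all `f ∈ H^p`. -/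
def opNorm (p q α : ℝ) (φ ψ : ℂ → ℂ) : ℝ≥0∞ :=
  sInf {C : ℝ≥0∞ | ∀ f : ℂ → ℂ, DifferentiableOn ℂ f uDisk → hardyNorm p f < ⊤ →
    bergNorm q α (diffOp φ ψ f) ≤ C * hardyNorm p f}

/-!
Write `s_z = 1 - N (1 - |z|)`, so that `b_k = s_{a_k} a_k` with `1/2 ≤ s_{a_k} ≤ 1`.
In `|x u - y v|² = (x|u| - y|v|)² + x y (|u - v|² - (|u| - |v|)²)` the radial term does not
decrease, because `s_z |z| - s_w |w| = (|z| - |w|) (1 - N + N (|z| + |w|))` and the last factor is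
at least `1` near the boundary, while the angular term loses at most the factor `s_z s_w ≥ 1/4`.
So the numerator of `ρ` shrinks at most by `2`. The denominator grows at most by `3N`:
`|1 - s_z s_w w̄ z| ≤ |1 - w̄ z| + (1 - s_z s_w)` and
`1 - s_z s_w ≤ N ((1 - |z|) + (1 - |w|)) ≤ 2N (1 - |z| |w|) ≤ 2N |1 - w̄ z|`.
Hence `ρ(b_i, b_j) ≥ ρ(a_i, a_j) / (6N)`.
-/

lemma one_sub_norm_mul_norm_le_norm_one_sub_conj_mul (z w : ℂ) :
    1 - ‖w‖ * ‖z‖ ≤ ‖1 - starRingEnd ℂ w * z‖ := by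
  simpa [norm_mul] using norm_sub_norm_le (1 : ℂ) (starRingEnd ℂ w * z)

lemma norm_one_sub_conj_mul_pos {z w : ℂ} (hz : ‖z‖ < 1) (hw : ‖w‖ ≤ 1) :
    0 < ‖1 - starRingEnd ℂ w * z‖ := by
  have := one_sub_norm_mul_norm_le_norm_one_sub_conj_mul z w
  nlinarith [norm_nonneg z]

lemma norm_ofReal_mul_sub_ofReal_mul_sq (x y : ℝ) (u v : ℂ) :
    ‖(x : ℂ) * u - (y : ℂ) * v‖ ^ 2 =
      (x * ‖u‖ - y * ‖v‖) ^ 2 + x * y * (‖u - v‖ ^ 2 - (‖u‖ - ‖v‖) ^ 2) := by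
  have hre : ((x : ℂ) * u * starRingEnd ℂ ((y : ℂ) * v)).re =
      x * y * (u * starRingEnd ℂ v).re := by
    rw [map_mul, Complex.conj_ofReal, mul_mul_mul_comm, ← Complex.ofReal_mul,
      Complex.re_ofReal_mul]
  simp only [Complex.sq_norm, Complex.normSq_sub, Complex.normSq_mul, Complex.normSq_ofReal,
    hre]
  simp only [← Complex.sq_norm]
  ring

lemma mul_norm_sub_sq_le_norm_ofReal_mul_sub_sq {x y c : ℝ} {u v : ℂ} (hc1 : c ≤ 1)
    (hcxy : c ≤ x * y) (hmod : (‖u‖ - ‖v‖) ^ 2 ≤ (x * ‖u‖ - y * ‖v‖) ^ 2) :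
    c * ‖u - v‖ ^ 2 ≤ ‖(x : ℂ) * u - (y : ℂ) * v‖ ^ 2 := by
  have hangle : (‖u‖ - ‖v‖) ^ 2 ≤ ‖u - v‖ ^ 2 := by
    rw [← sq_abs]
    exact pow_le_pow_left₀ (abs_nonneg _) (abs_norm_sub_norm_le u v) 2
  rw [norm_ofReal_mul_sub_ofReal_mul_sq]
  nlinarith [mul_le_mul_of_nonneg_right hcxy (sub_nonneg.2 hangle),
    mul_nonneg (sub_nonneg.2 hc1) (sq_nonneg (‖u‖ - ‖v‖))]

lemma norm_one_sub_conj_ofReal_mul_le {x y : ℝ} {u v : ℂ} (hu : ‖u‖ ≤ 1) (hv : ‖v‖ ≤ 1)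
    (hxy : x * y ≤ 1) :
    ‖1 - starRingEnd ℂ ((y : ℂ) * v) * ((x : ℂ) * u)‖ ≤
      ‖1 - starRingEnd ℂ v * u‖ + (1 - x * y) := by
  have hsplit : 1 - starRingEnd ℂ ((y : ℂ) * v) * ((x : ℂ) * u)
      = (1 - starRingEnd ℂ v * u) + ((1 - x * y : ℝ) : ℂ) * (starRingEnd ℂ v * u) := by
    rw [map_mul, Complex.conj_ofReal]; push_cast; ring
  have hvu : ‖starRingEnd ℂ v * u‖ ≤ 1 := by
    rw [norm_mul, Complex.norm_conj]; exact mul_le_one₀ hv (norm_nonneg u) hu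
  calc _ ≤ ‖1 - starRingEnd ℂ v * u‖ + (1 - x * y) * ‖starRingEnd ℂ v * u‖ := by
        rw [hsplit]
        refine (norm_add_le _ _).trans_eq ?_
        rw [norm_mul, Complex.norm_real, Real.norm_of_nonneg (sub_nonneg.2 hxy)]
    _ ≤ _ := by gcongr; exact mul_le_of_le_one_right (sub_nonneg.2 hxy) hvu

def shrinkFactor (N : ℝ) (z : ℂ) : ℝ := 1 - N * (1 - ‖z‖)

def shrink (N : ℝ) (z : ℂ) : ℂ := (shrinkFactor N z : ℂ) * z

section shrink

variable {N : ℝ} {z w : ℂ}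

lemma half_le_shrinkFactor (hN : 0 < N) (hz : 1 - 1 / (2 * N) ≤ ‖z‖) :
    1 / 2 ≤ shrinkFactor N z := by
  have : N * (1 / (2 * N)) = 1 / 2 := by field_simp
  unfold shrinkFactor
  nlinarith

lemma shrinkFactor_le_one (hN : 0 ≤ N) (hz : ‖z‖ ≤ 1) : shrinkFactor N z ≤ 1 := by
  unfold shrinkFactor
  nlinarith

lemma norm_shrink_le_norm (hN : 0 < N) (hz1 : ‖z‖ ≤ 1) (hz : 1 - 1 / (2 * N) ≤ ‖z‖) :
    ‖shrink N z‖ ≤ ‖z‖ := by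
  have h0 : 0 ≤ shrinkFactor N z := by linarith [half_le_shrinkFactor hN hz]
  rw [shrink, norm_mul, Complex.norm_real, Real.norm_of_nonneg h0]
  exact mul_le_of_le_one_left (norm_nonneg z) (shrinkFactor_le_one hN.le hz1)

lemma sq_norm_sub_norm_le_sq_shrinkFactor_mul_sub (hN : 1 ≤ N) (hz : 1 - 1 / (2 * N) ≤ ‖z‖)
    (hw : 1 - 1 / (2 * N) ≤ ‖w‖) :
    (‖z‖ - ‖w‖) ^ 2 ≤ (shrinkFactor N z * ‖z‖ - shrinkFactor N w * ‖w‖) ^ 2 := by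
  have hfactor : shrinkFactor N z * ‖z‖ - shrinkFactor N w * ‖w‖
      = (‖z‖ - ‖w‖) * (1 - N + N * (‖z‖ + ‖w‖)) := by
    unfold shrinkFactor; ring
  have hge : 1 ≤ 1 - N + N * (‖z‖ + ‖w‖) := by
    have : N * (1 / (2 * N)) = 1 / 2 := by field_simp
    nlinarith [mul_le_mul_of_nonneg_left hz (zero_le_one.trans hN),
      mul_le_mul_of_nonneg_left hw (zero_le_one.trans hN)]
  rw [hfactor, mul_pow]
  exact le_mul_of_one_le_right (sq_nonneg _) (one_le_pow₀ hge)

lemma norm_sub_le_two_mul_norm_shrink_sub (hN : 1 ≤ N) (hz : 1 - 1 / (2 * N) ≤ ‖z‖)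
    (hw : 1 - 1 / (2 * N) ≤ ‖w‖) :
    ‖z - w‖ ≤ 2 * ‖shrink N z - shrink N w‖ := by
  have hprod : 1 / 4 ≤ shrinkFactor N z * shrinkFactor N w := by
    have hN0 : 0 < N := by linarith
    nlinarith [half_le_shrinkFactor hN0 hz, half_le_shrinkFactor hN0 hw]
  have hsq := mul_norm_sub_sq_le_norm_ofReal_mul_sub_sq (by norm_num) hprod
    (sq_norm_sub_norm_le_sq_shrinkFactor_mul_sub hN hz hw)
  rw [← shrink, ← shrink] at hsq
  refine (pow_le_pow_iff_left₀ (norm_nonneg _) (by positivity) two_ne_zero).1 ?_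
  linarith

lemma norm_one_sub_conj_shrink_mul_shrink_le (hN : 1 ≤ N) (hz1 : ‖z‖ ≤ 1) (hw1 : ‖w‖ ≤ 1)
    (hw : 1 - 1 / (2 * N) ≤ ‖w‖) :
    ‖1 - starRingEnd ℂ (shrink N w) * shrink N z‖ ≤ 3 * N * ‖1 - starRingEnd ℂ w * z‖ := by
  have hN0 : 0 < N := by linarith
  have hx1 := shrinkFactor_le_one hN0.le hz1
  have hy1 := shrinkFactor_le_one hN0.le hw1
  have hy := half_le_shrinkFactor hN0 hw
  have hW := one_sub_norm_mul_norm_le_norm_one_sub_conj_mul z w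
  have hdefect :
      1 - shrinkFactor N z * shrinkFactor N w ≤ 2 * N * ‖1 - starRingEnd ℂ w * z‖ := by
    unfold shrinkFactor at *
    nlinarith [mul_nonneg (sub_nonneg.2 hz1) (sub_nonneg.2 hw1), norm_nonneg z, norm_nonneg w,
      mul_nonneg (sub_nonneg.2 hx1) (sub_nonneg.2 hy1)]
  calc _ ≤ ‖1 - starRingEnd ℂ w * z‖ + (1 - shrinkFactor N z * shrinkFactor N w) :=
        norm_one_sub_conj_ofReal_mul_le hz1 hw1 (mul_le_one₀ hx1 (by linarith) hy1)
    _ ≤ 3 * N * ‖1 - starRingEnd ℂ w * z‖ := by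
        nlinarith [norm_nonneg (1 - starRingEnd ℂ w * z)]

lemma pd_div_le_pd_shrink (hN : 1 ≤ N) (hz1 : ‖z‖ < 1) (hw1 : ‖w‖ < 1)
    (hz : 1 - 1 / (2 * N) ≤ ‖z‖) (hw : 1 - 1 / (2 * N) ≤ ‖w‖) :
    pd z w / (6 * N) ≤ pd (shrink N z) (shrink N w) := by
  have hN0 : 0 < N := by linarith
  have hD : 0 < ‖1 - starRingEnd ℂ (shrink N w) * shrink N z‖ :=
    norm_one_sub_conj_mul_pos ((norm_shrink_le_norm hN0 hz1.le hz).trans_lt hz1)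
      ((norm_shrink_le_norm hN0 hw1.le hw).trans hw1.le)
  calc pd z w / (6 * N) = (‖z - w‖ / 2) / (3 * N * ‖1 - starRingEnd ℂ w * z‖) := by
        unfold pd; field_simp; ring
    _ ≤ pd (shrink N z) (shrink N w) :=
        div_le_div₀ (norm_nonneg _)
          (by linarith [norm_sub_le_two_mul_norm_shrink_sub hN hz hw]) hD
          (norm_one_sub_conj_shrink_mul_shrink_le hN hz1.le hw1.le hw)

end shrink

/-- Stability of separated sequences under the perturbation `b_k = (1 - N(1-|a_k|)) a_k`. -/
theorem stmt_8 :
    ∃ δ : ℝ, 0 < δ ∧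
      ∀ N : ℝ, 1 < N → ∀ r₀ : ℝ, 0 < r₀ → r₀ < 1 →
        ∀ a : ℕ → ℂ, (∀ k, a k ∈ uDisk) →
          (∀ i j, i ≠ j → r₀ ≤ pd (a i) (a j)) →
          (∀ k, 1 - 1 / (2 * N) ≤ ‖a k‖) →
          ∀ i j, i ≠ j →
            δ * r₀ / N ≤
              pd (((1 - N * (1 - ‖a i‖) : ℝ) : ℂ) * a i)
                 (((1 - N * (1 - ‖a j‖) : ℝ) : ℂ) * a j) := by
  refine ⟨1 / 6, by norm_num, fun N hN r₀ _ _ a ha hsep hnear i j hij => ?_⟩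
  calc 1 / 6 * r₀ / N = r₀ / (6 * N) := by ring
    _ ≤ pd (a i) (a j) / (6 * N) := by gcongr; exact hsep i j hij
    _ ≤ pd (shrink N (a i)) (shrink N (a j)) :=
        pd_div_le_pd_shrink hN.le (ha i) (ha j) (hnear i) (hnear j)

end
end

section
/- Let 2 ≤ q < ∞, α > −1, 0 < r < 1, and let φ, ψ be holomorphic self-maps of 𝔻 with joint pull-back measure μ. Then there exists a constant C > 0 such that for every holomorphic function f on 𝔻, ∫_𝔻 |f′(z)|^q dμ(z) ≤ C ∫_𝔻 q² |f(ζ)|^{q−2} |f′(ζ)|² (1−|ζ|)^{−q} μ(Δ(ζ,r)) dA(ζ). (Here q²|f(ζ)|^{q−2}|f′(ζ)|² is the Laplacian Δ|f|^q(ζ) of |f|^q for holomorphic f.) -/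
open MeasureTheory Set Complex Filter
open scoped ENNReal Real

noncomputable section

/-!
Fix `w ∈ 𝔻` and the Euclidean disk `B = B(w, s)`, `s = r (1 - |w|) / 4`. Every `ζ ∈ B` has
`w ∈ Δ(ζ, r)` and `1 - |ζ| ≤ 2 (1 - |w|)`, so it suffices to prove the local estimate
`(s |f'(w)|)^q ≲ ∫_B |f|^{q-2} |f'|^2 dA`; integrating the resulting pointwise bound for
`|f'(w)|^q` against `μ`, which lives on `𝔻`, and applying Tonelli gives the theorem.

The local estimate is elementary. Maximizing `(s/2 - |z - w|) |f'(z)|` yields a disk `B(z₀, d)`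
on which `|f'| ≤ 2m`, where `m = |f'(z₀)|` and `d m ≳ s |f'(w)|`. By the Schwarz lemma `f'`
varies by at most `m/8` on `B(z₀, d/32)`, so there `f` is affine with slope `f'(z₀)` up to a
small error, and on a disk of radius `d/128` inside it `|f| ≳ m d` and `|f'| ≳ m`.
-/

open Metric

theorem ae_map_mem_of_ae_mem {α β : Type*} [MeasurableSpace α] [MeasurableSpace β]
    {μ : Measure α} {f : α → β} {s : Set β} (hs : MeasurableSet s)
    (h : ∀ᵐ x ∂μ, f x ∈ s) : ∀ᵐ y ∂μ.map f, y ∈ s := by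
  by_cases hf : AEMeasurable f μ
  · exact (ae_map_iff hf hs).mpr h
  · simp [Measure.map_of_not_aemeasurable hf]

theorem lintegral_mul_measure_prodMk_preimage {α β : Type*} [MeasurableSpace α]
    [MeasurableSpace β] {μ : Measure α} {ν : Measure β} [SFinite μ] [SFinite ν]
    {g : α → ℝ≥0∞} (hg : AEMeasurable g μ) {S : Set (α × β)} (hS : MeasurableSet S) :
    ∫⁻ x, g x * ν (Prod.mk x ⁻¹' S) ∂μ = ∫⁻ y, ∫⁻ x in (fun x => (x, y)) ⁻¹' S, g x ∂μ ∂ν := by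
  have h := lintegral_withDensity_eq_lintegral_mul₀ hg
    (measurable_measure_prodMk_left (ν := ν) hS).aemeasurable
  rw [Pi.mul_def] at h
  rw [← h, ← Measure.prod_apply hS, Measure.prod_apply_symm hS]
  simp only [withDensity_apply']

theorem uDisk_eq_ball : uDisk = ball 0 1 := by
  ext z; simp [uDisk]

theorem measurableSet_uDisk : MeasurableSet uDisk :=
  uDisk_eq_ball ▸ measurableSet_ball

theorem measurableSet_setOf_mem_pDisk (r : ℝ) :
    MeasurableSet {p : ℂ × ℂ | p.2 ∈ pDisk p.1 r} :=
  (measurable_snd measurableSet_uDisk).inter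
    (measurableSet_lt (f := fun p : ℂ × ℂ => pd p.2 p.1) (by unfold pd; fun_prop)
      measurable_const)

instance : SFinite volA := by unfold volA; infer_instance

instance (q α : ℝ) (φ ψ : ℂ → ℂ) : SFinite (jointMu q α φ ψ) := by
  unfold jointMu bergMeasure; infer_instance

theorem ae_mem_uDisk_jointMu {q α : ℝ} {φ ψ : ℂ → ℂ} (hφ : MapsTo φ uDisk uDisk)
    (hψ : MapsTo ψ uDisk uDisk) : ∀ᵐ w ∂jointMu q α φ ψ, w ∈ uDisk := by
  have hmem : ∀ᵐ z ∂(bergMeasure α).withDensity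
      (fun z => ENNReal.ofReal (pd (φ z) (ψ z) ^ q)), z ∈ uDisk :=
    ((withDensity_absolutelyContinuous _ _).trans (withDensity_absolutelyContinuous _ _))
      (ae_restrict_mem measurableSet_uDisk)
  rw [jointMu, ae_add_measure_iff]
  exact ⟨ae_map_mem_of_ae_mem measurableSet_uDisk (hmem.mono fun z hz => hφ hz),
    ae_map_mem_of_ae_mem measurableSet_uDisk (hmem.mono fun z hz => hψ hz)⟩

theorem exists_ball_le_two_mul_of_continuousOn {E : Type*} [PseudoMetricSpace E] [ProperSpace E]
    {g : E → ℝ} {w : E} {T : ℝ} (hT : 0 ≤ T) (hg : ContinuousOn g (closedBall w T))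
    (hg0 : ∀ z, 0 ≤ g z) :
    ∃ z₀ d, ball z₀ d ⊆ closedBall w T ∧ T * g w ≤ 2 * d * g z₀ ∧
      ∀ z ∈ ball z₀ d, g z ≤ 2 * g z₀ := by
  have hcont : ContinuousOn (fun z => (T - dist z w) * g z) (closedBall w T) :=
    (continuousOn_const.sub (continuous_id.dist continuous_const).continuousOn).mul hg
  obtain ⟨z₀, hz₀, hmax⟩ :=
    (isCompact_closedBall w T).exists_isMaxOn (nonempty_closedBall.2 hT) hcont
  rw [mem_closedBall] at hz₀
  have hsub : ball z₀ ((T - dist z₀ w) / 2) ⊆ closedBall w T := fun z hz => by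
    have := dist_triangle z z₀ w
    rw [mem_ball] at hz
    rw [mem_closedBall]
    linarith
  refine ⟨z₀, (T - dist z₀ w) / 2, hsub, ?_, fun z hz => ?_⟩
  · have := hmax (mem_closedBall_self hT)
    simp only [mem_ofPred_eq, dist_self, sub_zero] at this
    linarith
  · have hd : 0 < (T - dist z₀ w) / 2 := pos_of_mem_ball hz
    have hdz : (T - dist z₀ w) / 2 ≤ T - dist z w := by
      have := dist_triangle z z₀ w
      rw [mem_ball] at hz
      linarith
    have := hmax (hsub hz)
    simp only [mem_ofPred_eq] at this
    nlinarith [hg0 z]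

theorem dist_le_two_mul_div_mul_dist_of_norm_le {E F : Type*} [NormedAddCommGroup E]
    [NormedSpace ℂ E] [NormedAddCommGroup F] [NormedSpace ℂ F] {f : E → F} {c z : E} {R M : ℝ}
    (hd : DifferentiableOn ℂ f (ball c R)) (hM : ∀ x ∈ ball c R, ‖f x‖ ≤ M)
    (hz : z ∈ ball c R) : dist (f z) (f c) ≤ 2 * M / R * dist z c := by
  refine Complex.dist_le_div_mul_dist_of_mapsTo_ball hd (fun x hx => ?_) hz
  rw [mem_closedBall, dist_eq_norm]
  linarith [norm_sub_le (f x) (f c), hM x hx, hM c (mem_ball_self (pos_of_mem_ball hz))]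

theorem norm_sub_sub_deriv_mul_le {f : ℂ → ℂ} {s : Set ℂ} {c z : ℂ} {ε : ℝ} (hs : Convex ℝ s)
    (hf : ∀ x ∈ s, DifferentiableAt ℂ f x) (hε : ∀ x ∈ s, ‖deriv f x - deriv f c‖ ≤ ε)
    (hc : c ∈ s) (hz : z ∈ s) :
    ‖f z - f c - deriv f c * (z - c)‖ ≤ ε * ‖z - c‖ := by
  have hderiv : ∀ x ∈ s, HasDerivWithinAt (fun y => f y - deriv f c * y)
      (deriv f x - deriv f c) s x := fun x hx =>
    ((hf x hx).hasDerivAt.sub ((hasDerivAt_id x).const_mul (deriv f c) |>.congr_deriv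
      (mul_one _))).hasDerivWithinAt
  calc ‖f z - f c - deriv f c * (z - c)‖
      = ‖(f z - deriv f c * z) - (f c - deriv f c * c)‖ := by ring_nf
    _ ≤ ε * ‖z - c‖ := hs.norm_image_sub_le_of_norm_hasDerivWithin_le hderiv hε hc hz

theorem exists_norm_eq_mul_le_norm_add_mul (b m : ℂ) {t : ℝ} (ht : 0 ≤ t) :
    ∃ v : ℂ, ‖v‖ = t ∧ ‖m‖ * t ≤ ‖b + m * v‖ := by
  -- the values at `t` and `-t` differ by `2 * m * t`
  by_contra! h
  have hplus := h t (by simp [abs_of_nonneg ht])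
  have hminus := h (-t) (by simp [abs_of_nonneg ht])
  have : ‖m‖ * (2 * t) ≤ ‖b + m * t‖ + ‖b + m * -t‖ := by
    calc ‖m‖ * (2 * t) = ‖(b + m * t) - (b + m * -t)‖ := by
          rw [show b + m * t - (b + m * -t) = m * (2 * t : ℝ) by push_cast; ring, norm_mul,
            Complex.norm_real, Real.norm_of_nonneg (by positivity)]
      _ ≤ _ := norm_sub_le _ _
  linarith

theorem exists_ball_norm_ge_of_norm_sub_sub_mul_le {f : ℂ → ℂ} {c m : ℂ} {τ : ℝ} (hτ : 0 ≤ τ)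
    (hf : ∀ z ∈ closedBall c τ, ‖f z - f c - m * (z - c)‖ ≤ ‖m‖ / 8 * ‖z - c‖) :
    ∃ c', ball c' (τ / 4) ⊆ closedBall c τ ∧ ∀ z ∈ ball c' (τ / 4), ‖m‖ * τ / 8 ≤ ‖f z‖ := by
  obtain ⟨v, hv, hlarge⟩ := exists_norm_eq_mul_le_norm_add_mul (f c) m (t := τ / 2) (by positivity)
  have hnear : ∀ z ∈ ball (c + v) (τ / 4), ‖z - c‖ ≤ 3 * τ / 4 := fun z hz => by
    rw [mem_ball, dist_eq_norm] at hz
    have := norm_add_le (z - (c + v)) v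
    rw [show z - (c + v) + v = z - c by ring] at this
    linarith
  refine ⟨c + v, fun z hz => mem_closedBall_iff_norm.2 (by linarith [hnear z hz]), fun z hz => ?_⟩
  have hz' : ‖z - (c + v)‖ < τ / 4 := mem_ball_iff_norm.1 hz
  have herr := hf z (mem_closedBall_iff_norm.2 (by linarith [hnear z hz]))
  have hm : ‖m * (z - (c + v))‖ ≤ ‖m‖ * (τ / 4) := by
    rw [norm_mul]; exact mul_le_mul_of_nonneg_left hz'.le (norm_nonneg m)
  have herr' : ‖m‖ / 8 * ‖z - c‖ ≤ ‖m‖ / 8 * (3 * τ / 4) :=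
    mul_le_mul_of_nonneg_left (hnear z hz) (by positivity)
  have htri := norm_sub_norm_le (f c + m * v) (f z)
  have htri' := norm_add_le (f z - f c - m * (z - c)) (m * (z - (c + v)))
  rw [show f z - f c - m * (z - c) + m * (z - (c + v)) = f z - (f c + m * v) by ring,
    norm_sub_rev] at htri'
  nlinarith [norm_nonneg m]

theorem volA_ball (c : ℂ) {ρ : ℝ} (hρ : 0 ≤ ρ) : volA (ball c ρ) = ENNReal.ofReal (ρ ^ 2) := by
  rw [volA, Measure.smul_apply, Complex.volume_ball, smul_eq_mul, ← ENNReal.ofReal_pow hρ,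
    ← NNReal.coe_real_pi, ENNReal.ofReal_coe_nnreal, mul_comm _ (NNReal.pi : ℝ≥0∞), ← mul_assoc,
    ENNReal.inv_mul_cancel (ENNReal.coe_ne_zero.2 NNReal.pi_ne_zero) ENNReal.coe_ne_top, one_mul]

theorem ofReal_le_setLIntegral_ball {q : ℝ} (hq : 2 ≤ q) {f g : ℂ → ℂ} {c : ℂ} {ρ m₀ m₁ : ℝ}
    (hρ : 0 ≤ ρ) (hm₀ : 0 ≤ m₀) (hm₁ : 0 ≤ m₁)
    (h : ∀ z ∈ ball c ρ, m₀ ≤ ‖f z‖ ∧ m₁ ≤ ‖g z‖) :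
    ENNReal.ofReal (m₀ ^ (q - 2) * m₁ ^ 2 * ρ ^ 2) ≤
      ∫⁻ z in ball c ρ, ENNReal.ofReal (‖f z‖ ^ (q - 2) * ‖g z‖ ^ 2) ∂volA := by
  rw [ENNReal.ofReal_mul (by positivity), ← volA_ball c hρ, ← setLIntegral_const]
  refine setLIntegral_mono' measurableSet_ball fun z hz => ENNReal.ofReal_le_ofReal ?_
  obtain ⟨hf, hg⟩ := h z hz
  gcongr

theorem exists_ball_norm_ge_and_norm_deriv_ge {f : ℂ → ℂ} {w : ℂ} {s : ℝ} (hs : 0 < s)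
    (hf : DifferentiableOn ℂ f (ball w s)) :
    ∃ c ρ m₀ m₁, 0 ≤ ρ ∧ 0 ≤ m₀ ∧ 0 ≤ m₁ ∧ ball c ρ ⊆ ball w s ∧
      s * ‖deriv f w‖ / 1024 ≤ m₀ ∧ m₀ ≤ m₁ * ρ ∧
      ∀ z ∈ ball c ρ, m₀ ≤ ‖f z‖ ∧ m₁ ≤ ‖deriv f z‖ := by
  have hf' : DifferentiableOn ℂ (deriv f) (ball w s) :=
    (hf.analyticOnNhd isOpen_ball).deriv.differentiableOn
  obtain ⟨z₀, d, hsub, hwz₀, hz₀⟩ := exists_ball_le_two_mul_of_continuousOn (half_pos hs).le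
    (hf'.continuousOn.norm.mono (closedBall_subset_ball (half_lt_self hs)))
    (fun z => norm_nonneg (deriv f z))
  have hsub' : ball z₀ d ⊆ ball w s := hsub.trans (closedBall_subset_ball (half_lt_self hs))
  set m := ‖deriv f z₀‖
  by_cases hdm : d * m ≤ 0
  · refine ⟨w, 0, 0, 0, le_rfl, le_rfl, le_rfl, by simp, ?_, by simp, by simp⟩
    nlinarith [norm_nonneg (deriv f w)]
  have hd : 0 < d := by by_contra! h; nlinarith [norm_nonneg (deriv f z₀)]
  have hm : 0 < m := by by_contra! h; nlinarith
  set τ := d / 32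
  have hτ : closedBall z₀ τ ⊆ ball z₀ d := closedBall_subset_ball (by simp only [τ]; linarith)
  have hclose : ∀ z ∈ closedBall z₀ τ, ‖deriv f z - deriv f z₀‖ ≤ m / 8 := fun z hz => by
    have := dist_le_two_mul_div_mul_dist_of_norm_le (hf'.mono hsub') hz₀ (hτ hz)
    rw [dist_eq_norm] at this
    calc _ ≤ 2 * (2 * m) / d * dist z z₀ := this
      _ ≤ 2 * (2 * m) / d * τ := by gcongr; exact mem_closedBall.1 hz
      _ = m / 8 := by field_simp; ring
  have haffine : ∀ z ∈ closedBall z₀ τ, ‖f z - f z₀ - deriv f z₀ * (z - z₀)‖ ≤ m / 8 * ‖z - z₀‖ :=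
    fun z hz => norm_sub_sub_deriv_mul_le (convex_closedBall z₀ τ)
      (fun x hx => hf.differentiableAt (isOpen_ball.mem_nhds (hsub' (hτ hx)))) hclose
      (mem_closedBall_self (by positivity)) hz
  obtain ⟨c, hc, hfc⟩ := exists_ball_norm_ge_of_norm_sub_sub_mul_le (by positivity) haffine
  refine ⟨c, τ / 4, m * τ / 8, 7 / 8 * m, by positivity, by positivity, by positivity,
    hc.trans (hτ.trans hsub'), ?_, ?_, fun z hz => ⟨hfc z hz, ?_⟩⟩
  · -- `s ‖f' w‖ ≤ 4 d m = 128 m τ`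
    simp only [τ]; linarith
  · nlinarith [mul_pos hm (show 0 < τ by positivity)]
  · have := norm_sub_norm_le (deriv f z₀) (deriv f z)
    rw [norm_sub_rev] at this
    linarith [hclose z (hc hz)]

theorem ofReal_rpow_le_setLIntegral_ball {q : ℝ} (hq : 2 ≤ q) {f : ℂ → ℂ} {w : ℂ} {s : ℝ}
    (hs : 0 < s) (hf : DifferentiableOn ℂ f (ball w s)) :
    ENNReal.ofReal ((s * ‖deriv f w‖ / 1024) ^ q) ≤
      ∫⁻ ζ in ball w s, ENNReal.ofReal (‖f ζ‖ ^ (q - 2) * ‖deriv f ζ‖ ^ 2) ∂volA := by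
  obtain ⟨c, ρ, m₀, m₁, hρ, hm₀, hm₁, hsub, hlow, hm₀m₁, hbounds⟩ :=
    exists_ball_norm_ge_and_norm_deriv_ge hs hf
  have hx : 0 ≤ s * ‖deriv f w‖ / 1024 := by positivity
  calc ENNReal.ofReal ((s * ‖deriv f w‖ / 1024) ^ q)
      ≤ ENNReal.ofReal (m₀ ^ (q - 2) * m₁ ^ 2 * ρ ^ 2) := by
        refine ENNReal.ofReal_le_ofReal ?_
        have hsplit : (s * ‖deriv f w‖ / 1024) ^ q
            = (s * ‖deriv f w‖ / 1024) ^ (q - 2) * (s * ‖deriv f w‖ / 1024) ^ 2 := by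
          rw [← Real.rpow_add_natCast' hx (by push_cast; linarith)]
          norm_num
        rw [mul_assoc, ← mul_pow, hsplit]
        gcongr
        exact hlow.trans hm₀m₁
    _ ≤ ∫⁻ z in ball c ρ, ENNReal.ofReal (‖f z‖ ^ (q - 2) * ‖deriv f z‖ ^ 2) ∂volA :=
        ofReal_le_setLIntegral_ball hq hρ hm₀ hm₁ hbounds
    _ ≤ _ := lintegral_mono_set hsub

theorem one_sub_norm_le_norm_one_sub_conj_mul {ζ : ℂ} (hζ : ‖ζ‖ ≤ 1) (w : ℂ) :
    1 - ‖w‖ ≤ ‖1 - (starRingEnd ℂ) ζ * w‖ := by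
  have := norm_sub_norm_le (1 : ℂ) ((starRingEnd ℂ) ζ * w)
  rw [norm_mul, Complex.norm_conj, norm_one] at this
  nlinarith [norm_nonneg w]

theorem mem_pDisk_of_norm_sub_lt {w ζ : ℂ} {r : ℝ} (hw : w ∈ uDisk) (hζ : ‖ζ‖ ≤ 1)
    (h : ‖w - ζ‖ < r * (1 - ‖w‖)) : w ∈ pDisk ζ r := by
  have hδ : 0 < 1 - ‖w‖ := sub_pos.2 hw
  refine ⟨hw, ?_⟩
  calc pd w ζ ≤ ‖w - ζ‖ / (1 - ‖w‖) :=
        div_le_div_of_nonneg_left (norm_nonneg _) hδ (one_sub_norm_le_norm_one_sub_conj_mul hζ w)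
    _ < r := (div_lt_iff₀ hδ).2 h

theorem ball_subset_of_mem_uDisk {w : ℂ} {r : ℝ} (hw : w ∈ uDisk) (hr : r ≤ 1) :
    ball w (r * (1 - ‖w‖) / 4) ⊆
      {ζ | ζ ∈ uDisk ∧ 1 - ‖ζ‖ ≤ 2 * (1 - ‖w‖) ∧ w ∈ pDisk ζ r} := by
  intro ζ hζ
  have hδ : 0 < 1 - ‖w‖ := sub_pos.2 hw
  have hnear : ‖ζ - w‖ < r * (1 - ‖w‖) / 4 := mem_ball_iff_norm.1 hζ
  have hr : 0 < r := by nlinarith [norm_nonneg (ζ - w)]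
  have hζw := norm_le_norm_add_norm_sub' ζ w
  have hwζ := norm_le_norm_add_norm_sub' w ζ
  rw [norm_sub_rev] at hwζ
  have hζ1 : ‖ζ‖ < 1 := by nlinarith
  refine ⟨hζ1, by nlinarith, mem_pDisk_of_norm_sub_lt hw hζ1.le ?_⟩
  rw [norm_sub_rev]
  nlinarith

theorem ofReal_mul_setLIntegral_ball_le {q r : ℝ} (hq : 2 ≤ q) (hr : r ≤ 1) {f : ℂ → ℂ} {w : ℂ}
    (hw : w ∈ uDisk) :
    ENNReal.ofReal ((2 * (1 - ‖w‖)) ^ (-q)) *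
      ∫⁻ ζ in ball w (r * (1 - ‖w‖) / 4),
        ENNReal.ofReal (‖f ζ‖ ^ (q - 2) * ‖deriv f ζ‖ ^ 2) ∂volA ≤
      ∫⁻ ζ in {ζ | w ∈ pDisk ζ r}, ENNReal.ofReal (q ^ 2 * ‖f ζ‖ ^ (q - 2) * ‖deriv f ζ‖ ^ 2 *
        (1 - ‖ζ‖) ^ (-q)) ∂volA.restrict uDisk := by
  have hsub := ball_subset_of_mem_uDisk hw hr
  rw [← lintegral_const_mul' _ _ ENNReal.ofReal_ne_top,
    ← Measure.restrict_restrict_of_subset fun ζ hζ => (hsub hζ).1]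
  refine (setLIntegral_mono' measurableSet_ball fun ζ hζ => ?_).trans
    (lintegral_mono_set fun ζ hζ => (hsub hζ).2.2)
  obtain ⟨hζ1, hζδ, -⟩ := hsub hζ
  have hζ0 : 0 < 1 - ‖ζ‖ := sub_pos.2 hζ1
  have hw0 : 0 < 1 - ‖w‖ := sub_pos.2 hw
  rw [← ENNReal.ofReal_mul (by positivity)]
  refine ENNReal.ofReal_le_ofReal ?_
  have hweight : (2 * (1 - ‖w‖)) ^ (-q) ≤ (1 - ‖ζ‖) ^ (-q) :=
    Real.rpow_le_rpow_of_nonpos hζ0 hζδ (by linarith)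
  have hq2 : 1 ≤ q ^ 2 := by nlinarith
  calc (2 * (1 - ‖w‖)) ^ (-q) * (‖f ζ‖ ^ (q - 2) * ‖deriv f ζ‖ ^ 2)
      ≤ 1 * (1 - ‖ζ‖) ^ (-q) * (‖f ζ‖ ^ (q - 2) * ‖deriv f ζ‖ ^ 2) := by
        rw [one_mul]; gcongr
    _ ≤ q ^ 2 * (1 - ‖ζ‖) ^ (-q) * (‖f ζ‖ ^ (q - 2) * ‖deriv f ζ‖ ^ 2) := by gcongr
    _ = _ := by ring

theorem ofReal_norm_deriv_rpow_le_setLIntegral {q r : ℝ} (hq : 2 ≤ q) (hr0 : 0 < r) (hr1 : r ≤ 1)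
    {f : ℂ → ℂ} (hf : DifferentiableOn ℂ f uDisk) {w : ℂ} (hw : w ∈ uDisk) :
    ENNReal.ofReal (‖deriv f w‖ ^ q) ≤ ENNReal.ofReal ((8192 / r) ^ q) *
      ∫⁻ ζ in {ζ | w ∈ pDisk ζ r}, ENNReal.ofReal (q ^ 2 * ‖f ζ‖ ^ (q - 2) * ‖deriv f ζ‖ ^ 2 *
        (1 - ‖ζ‖) ^ (-q)) ∂volA.restrict uDisk := by
  set δ := 1 - ‖w‖
  have hδ : 0 < δ := sub_pos.2 hw
  set s := r * δ / 4
  have hs : 0 < s := by positivity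
  have hscale : (8192 / r) ^ q * ((2 * δ) ^ (-q) * (s * ‖deriv f w‖ / 1024) ^ q)
      = ‖deriv f w‖ ^ q := by
    rw [Real.rpow_neg (by positivity), ← Real.inv_rpow (by positivity),
      ← Real.mul_rpow (by positivity) (by positivity),
      ← Real.mul_rpow (by positivity) (by positivity)]
    congr 1
    simp only [s]
    field_simp
    ring
  have hlocal := ofReal_rpow_le_setLIntegral_ball hq hs
    (hf.mono fun ζ hζ => (ball_subset_of_mem_uDisk hw hr1 hζ).1)
  calc ENNReal.ofReal (‖deriv f w‖ ^ q)
      = ENNReal.ofReal ((8192 / r) ^ q) * (ENNReal.ofReal ((2 * δ) ^ (-q)) *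
          ENNReal.ofReal ((s * ‖deriv f w‖ / 1024) ^ q)) := by
        rw [← ENNReal.ofReal_mul (by positivity), ← ENNReal.ofReal_mul (by positivity), hscale]
    _ ≤ _ := by
        gcongr
        exact (mul_le_mul_right hlocal _).trans (ofReal_mul_setLIntegral_ball_le hq hr1 hw)

theorem stmt_11_general (q α r : ℝ) (hq : 2 ≤ q)
    (hr0 : 0 < r) (hr1 : r < 1) (φ ψ : ℂ → ℂ)
    (hφm : MapsTo φ uDisk uDisk)
    (hψm : MapsTo ψ uDisk uDisk) :
    ∃ C > (0:ℝ), ∀ f : ℂ → ℂ, DifferentiableOn ℂ f uDisk →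
      (∫⁻ z, ENNReal.ofReal (‖deriv f z‖ ^ q) ∂jointMu q α φ ψ) ≤
        ENNReal.ofReal C *
          ∫⁻ ζ in uDisk,
            ENNReal.ofReal (q ^ 2 * ‖f ζ‖ ^ (q - 2) *
                ‖deriv f ζ‖ ^ 2 * (1 - ‖ζ‖) ^ (-q)) *
              jointMu q α φ ψ (pDisk ζ r) ∂volA := by
  refine ⟨(8192 / r) ^ q, by positivity, fun f hf => ?_⟩
  have hmeas : AEMeasurable (fun ζ => ENNReal.ofReal (q ^ 2 * ‖f ζ‖ ^ (q - 2) *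
      ‖deriv f ζ‖ ^ 2 * (1 - ‖ζ‖) ^ (-q))) (volA.restrict uDisk) := by
    have := hf.continuousOn.aemeasurable (μ := volA) measurableSet_uDisk
    have := measurable_deriv f
    fun_prop
  calc (∫⁻ z, ENNReal.ofReal (‖deriv f z‖ ^ q) ∂jointMu q α φ ψ)
      ≤ ∫⁻ w, ENNReal.ofReal ((8192 / r) ^ q) *
          ∫⁻ ζ in {ζ | w ∈ pDisk ζ r}, ENNReal.ofReal (q ^ 2 * ‖f ζ‖ ^ (q - 2) *
            ‖deriv f ζ‖ ^ 2 * (1 - ‖ζ‖) ^ (-q)) ∂volA.restrict uDisk ∂jointMu q α φ ψ :=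
        lintegral_mono_ae <| (ae_mem_uDisk_jointMu hφm hψm).mono fun w hw =>
          ofReal_norm_deriv_rpow_le_setLIntegral hq hr0 hr1.le hf hw
    _ = _ := by
        rw [lintegral_const_mul' _ _ ENNReal.ofReal_ne_top]
        exact congrArg _
          (lintegral_mul_measure_prodMk_preimage hmeas (measurableSet_setOf_mem_pDisk r)).symm

/-- `∫_𝔻 |f'|^q dμ ≲ ∫_𝔻 Δ|f|^q(ζ) (1-|ζ|)^{-q} μ(Δ(ζ,r)) dA(ζ)` for `q ≥ 2`. -/
theorem stmt_11 (q α r : ℝ) (hq : 2 ≤ q) (hα : -1 < α)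
    (hr0 : 0 < r) (hr1 : r < 1) (φ ψ : ℂ → ℂ)
    (hφ : DifferentiableOn ℂ φ uDisk) (hφm : MapsTo φ uDisk uDisk)
    (hψ : DifferentiableOn ℂ ψ uDisk) (hψm : MapsTo ψ uDisk uDisk) :
    ∃ C > (0:ℝ), ∀ f : ℂ → ℂ, DifferentiableOn ℂ f uDisk →
      (∫⁻ z, ENNReal.ofReal (‖deriv f z‖ ^ q) ∂jointMu q α φ ψ) ≤
        ENNReal.ofReal C *
          ∫⁻ ζ in uDisk,
            ENNReal.ofReal (q ^ 2 * ‖f ζ‖ ^ (q - 2) *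
                ‖deriv f ζ‖ ^ 2 * (1 - ‖ζ‖) ^ (-q)) *
              jointMu q α φ ψ (pDisk ζ r) ∂volA :=
  stmt_11_general q α r hq hr0 hr1 φ ψ hφm hψm

end
end
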